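/- arXiv:2407.05225 — 2 statements merged into one kernel-verified Lean document; each statement's English description precedes it below -/
import Mathlib

section
/- Let m ≤ M ≤ i+1 be positive integers. Suppose |s_j| ≤ 1/j! for j = 1, …, m and |t| ≤ 1/(2(i+1)). Then |t^M + Σ_{j=1}^{m} (M)_j s_j t^{M−j}| ≤ 2(M|t|)^{M−m}. -/
-- choose M j ≤ M^(m-j) * choose M m  for j ≤ m ≤ M
lemma aux_choose_le (M : ℕ) : ∀ m j : ℕ, j ≤ m → m ≤ M →
    Nat.choose M j ≤ M ^ (m - j) * Nat.choose M m := by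
  intro m
  induction m with
  | zero => intro j hj _; interval_cases j; simp
  | succ n ih =>
    intro j hj hm
    rcases Nat.eq_or_lt_of_le hj with h | h
    · subst h; simp
    · have hj' : j ≤ n := Nat.lt_succ_iff.mp h
      have hn : n ≤ M := le_trans (Nat.le_succ n) hm
      have key : Nat.choose M n ≤ M * Nat.choose M (n + 1) := by
        have h1 : Nat.choose M (n+1) * (n+1) = Nat.choose M n * (M - n) :=
          Nat.choose_succ_right_eq M n
        have h2 : 1 ≤ M - n := Nat.le_sub_of_add_le (by omega)
        calc Nat.choose M n ≤ Nat.choose M n * (M - n) := Nat.le_mul_of_pos_right _ (by omega)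
          _ = Nat.choose M (n+1) * (n+1) := h1.symm
          _ ≤ Nat.choose M (n+1) * M := Nat.mul_le_mul_left _ hm
          _ = M * Nat.choose M (n+1) := Nat.mul_comm _ _
      calc Nat.choose M j ≤ M ^ (n - j) * Nat.choose M n := ih j hj' hn
        _ ≤ M ^ (n - j) * (M * Nat.choose M (n+1)) := Nat.mul_le_mul_left _ key
        _ = M ^ (n + 1 - j) * Nat.choose M (n+1) := by
            rw [Nat.succ_sub hj', pow_succ]; ring

lemma aux_geom : ∀ m : ℕ, ∑ j ∈ Finset.Icc 1 m, (1/2 : ℝ) ^ (m - j) = 2 - 2 * (1/2) ^ m := by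
  intro m
  induction m with
  | zero => simp
  | succ n ih =>
    rw [show Finset.Icc 1 (n+1) = insert (n+1) (Finset.Icc 1 n) by
      ext x; simp; omega]
    rw [Finset.sum_insert (by simp)]
    have : ∑ j ∈ Finset.Icc 1 n, (1/2 : ℝ) ^ (n + 1 - j)
        = (1/2) * ∑ j ∈ Finset.Icc 1 n, (1/2 : ℝ) ^ (n - j) := by
      rw [Finset.mul_sum]
      apply Finset.sum_congr rfl
      intro j hj
      simp only [Finset.mem_Icc] at hj
      rw [show n + 1 - j = (n - j) + 1 by omega, pow_succ]
      ring
    rw [this, ih]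
    simp [pow_succ]
    ring



/-- Lemma 4.1 of the paper: if `m ≤ M ≤ i+1` are positive integers, `|s_j| ≤ 1/j!` for
`j = 1, …, m`, and `|t| ≤ 1/(2(i+1))`, then
`|t^M + Σ_{j=1}^{m} (M)_j s_j t^{M−j}| ≤ 2(M|t|)^{M−m}`,
where `(M)_j = M!/(M−j)!` is the falling factorial. -/
theorem stmt3 (i m M : ℕ) (hm : 1 ≤ m) (hmM : m ≤ M) (hMi : M ≤ i + 1)
    (t : ℝ) (s : ℕ → ℝ)
    (hs : ∀ j, 1 ≤ j → j ≤ m → |s j| ≤ 1 / (Nat.factorial j : ℝ))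
    (ht : |t| ≤ 1 / (2 * ((i : ℝ) + 1))) :
    |t ^ M + ∑ j ∈ Finset.Icc 1 m,
        ((Nat.factorial M : ℝ) / (Nat.factorial (M - j) : ℝ)) * s j * t ^ (M - j)|
      ≤ 2 * ((M : ℝ) * |t|) ^ (M - m) := by
  set u := |t| with hudef
  have hu0 : 0 ≤ u := abs_nonneg t
  have hM1 : 1 ≤ M := hm.trans hmM
  have hMR : (1 : ℝ) ≤ (M : ℝ) := by exact_mod_cast hM1
  have hMu : (M : ℝ) * u ≤ 1 / 2 := by
    have h1 : (M : ℝ) ≤ (i : ℝ) + 1 := by exact_mod_cast hMi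
    have h2 : (0 : ℝ) < (i : ℝ) + 1 := by positivity
    have h2' : (0 : ℝ) < 2 * ((i : ℝ) + 1) := by positivity
    have h5 : u * (2 * ((i : ℝ) + 1)) ≤ 1 := by
      rw [← le_div_iff₀ h2']; exact ht
    nlinarith
  have huhalf : u ≤ 1 / 2 := by nlinarith
  -- Step A: triangle inequality and bound each term by choose M j * u^(M-j)
  have stepA : |t ^ M + ∑ j ∈ Finset.Icc 1 m,
        ((Nat.factorial M : ℝ) / (Nat.factorial (M - j) : ℝ)) * s j * t ^ (M - j)|
      ≤ u ^ M + ∑ j ∈ Finset.Icc 1 m, (Nat.choose M j : ℝ) * u ^ (M - j) := by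
    refine (abs_add_le _ _).trans (add_le_add ?_ ?_)
    · rw [abs_pow]
    refine (Finset.abs_sum_le_sum_abs _ _).trans (Finset.sum_le_sum ?_)
    intro j hj
    simp only [Finset.mem_Icc] at hj
    have hjM : j ≤ M := hj.2.trans hmM
    have hcast : (Nat.choose M j : ℝ) = (Nat.factorial M : ℝ) /
        ((Nat.factorial j : ℝ) * (Nat.factorial (M - j) : ℝ)) := by
      rw [Nat.cast_choose ℝ hjM]
    rw [abs_mul, abs_mul, abs_pow, abs_div, Nat.abs_cast, Nat.abs_cast]
    have hfp : (0 : ℝ) < (Nat.factorial (M - j) : ℝ) := by positivity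
    have hfp2 : (0 : ℝ) < (Nat.factorial j : ℝ) := by positivity
    have := hs j hj.1 hj.2
    calc (Nat.factorial M : ℝ) / (Nat.factorial (M - j) : ℝ) * |s j| * u ^ (M - j)
        ≤ (Nat.factorial M : ℝ) / (Nat.factorial (M - j) : ℝ) *
            (1 / (Nat.factorial j : ℝ)) * u ^ (M - j) := by gcongr
      _ = (Nat.choose M j : ℝ) * u ^ (M - j) := by rw [hcast]; ring
  refine stepA.trans ?_
  have hC1 : (1 : ℝ) ≤ (Nat.choose M m : ℝ) := by
    exact_mod_cast Nat.succ_le_of_lt (Nat.choose_pos hmM)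
  have stepB : ∑ j ∈ Finset.Icc 1 m, (Nat.choose M j : ℝ) * u ^ (M - j)
      ≤ (Nat.choose M m : ℝ) * u ^ (M - m) * ∑ j ∈ Finset.Icc 1 m, (1/2 : ℝ) ^ (m - j) := by
    rw [Finset.mul_sum]
    apply Finset.sum_le_sum
    intro j hj
    simp only [Finset.mem_Icc] at hj
    have hsplit : M - j = (m - j) + (M - m) := by omega
    have h1 : (Nat.choose M j : ℝ) ≤ (M : ℝ) ^ (m - j) * (Nat.choose M m : ℝ) := by
      exact_mod_cast aux_choose_le M m j hj.2 hmM
    have hMu0 : (0 : ℝ) ≤ (M : ℝ) * u := by positivity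
    calc (Nat.choose M j : ℝ) * u ^ (M - j)
        = (Nat.choose M j : ℝ) * (u ^ (m - j) * u ^ (M - m)) := by rw [hsplit, pow_add]
      _ ≤ ((M : ℝ) ^ (m - j) * (Nat.choose M m : ℝ)) * (u ^ (m - j) * u ^ (M - m)) := by
          gcongr
      _ = (Nat.choose M m : ℝ) * u ^ (M - m) * (((M : ℝ) * u) ^ (m - j)) := by
          rw [mul_pow]; ring
      _ ≤ (Nat.choose M m : ℝ) * u ^ (M - m) * (1/2 : ℝ) ^ (m - j) := by
          gcongr
  rw [aux_geom m] at stepB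
  have hCu : (Nat.choose M m : ℝ) * u ^ (M - m) ≤ ((M : ℝ) * u) ^ (M - m) := by
    rw [mul_pow]
    gcongr
    have h2 : Nat.choose M m = Nat.choose M (M - m) := (Nat.choose_symm hmM).symm
    have h3 : Nat.choose M (M - m) ≤ M ^ (M - m) := Nat.choose_le_pow _ _
    exact_mod_cast h2 ▸ h3
  have hum : u ^ M = u ^ (M - m) * u ^ m := by rw [← pow_add]; congr 1; omega
  have hupow : u ^ m ≤ (1/2 : ℝ) ^ m := pow_le_pow_left₀ hu0 huhalf m
  have hA : (0 : ℝ) ≤ u ^ (M - m) := by positivity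
  have hP : (0 : ℝ) ≤ (1/2 : ℝ) ^ m := by positivity
  calc u ^ M + ∑ j ∈ Finset.Icc 1 m, (Nat.choose M j : ℝ) * u ^ (M - j)
      ≤ u ^ (M - m) * u ^ m
        + (Nat.choose M m : ℝ) * u ^ (M - m) * (2 - 2 * (1/2) ^ m) := by
        rw [← hum]; exact add_le_add le_rfl stepB
    _ ≤ 2 * ((Nat.choose M m : ℝ) * u ^ (M - m)) := by
        nlinarith [mul_le_mul_of_nonneg_left hupow hA,
          mul_nonneg (mul_nonneg (le_trans zero_le_one hC1) hA) hP]
    _ ≤ 2 * ((M : ℝ) * u) ^ (M - m) := by linarith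
end

section
/- Let k₁, k₂ be nonnegative integers with 2^{−k_i} > δ^{i/4} for i = 1 or i = 2 and suppose 2^{2k₁ − 3k₂} ≥ δ (failure of flatness at scale 2^{k₁−k₂}). Define the cap's t-length T = (2^{k₂}δ)^{1/2}. Then with 0 ≤ t ≤ T, s₁ ∈ [2^{−k₁}, 2^{1−k₁}), s₂ ∈ [2^{−k₂}, 2^{1−k₂}), and k₂ > 2k₁: (a) 2^{−k₁} T³ ≤ δ, (b) 2^{−k₂} T² ≤ δ·2, and hence |t⁴ + 4t³s₁ + 12t²s₂| ≤ C·δ for an absolute constant C when additionally T ≤ δ^{1/4}. -/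
/-- Almost-flatness verification in the case `k₂ > 2k₁`: let `k₁, k₂` be nonnegative
integers with `2^{−k₁} > δ^{1/4}` or `2^{−k₂} > δ^{1/2}`, and suppose
`2^{2k₁−3k₂} ≥ δ` (failure of flatness at scale `2^{k₁−k₂}`).  With the cap `t`-length
`T = (2^{k₂}δ)^{1/2}`: (a) `2^{−k₁}T³ ≤ δ`, (b) `2^{−k₂}T² ≤ 2δ`, and hence for
`0 ≤ t ≤ T`, `s₁ ∈ [2^{−k₁}, 2^{1−k₁})`, `s₂ ∈ [2^{−k₂}, 2^{1−k₂})` one has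
`|t⁴ + 4t³s₁ + 12t²s₂| ≤ 33δ` when additionally `T ≤ δ^{1/4}`. -/
theorem stmt17 (k₁ k₂ : ℕ) (δ : ℝ) (hδ0 : 0 < δ) (hδ1 : δ ≤ 1)
    (hsize : ((2 : ℝ) ^ k₁)⁻¹ > δ ^ ((1 : ℝ) / 4) ∨ ((2 : ℝ) ^ k₂)⁻¹ > δ ^ ((1 : ℝ) / 2))
    (hk : k₂ > 2 * k₁)
    (hflatfail : δ * (2 : ℝ) ^ (3 * k₂) ≤ (2 : ℝ) ^ (2 * k₁)) :
    (((2 : ℝ) ^ k₁)⁻¹ * (Real.sqrt ((2 : ℝ) ^ k₂ * δ)) ^ 3 ≤ δ)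
    ∧ (((2 : ℝ) ^ k₂)⁻¹ * (Real.sqrt ((2 : ℝ) ^ k₂ * δ)) ^ 2 ≤ 2 * δ)
    ∧ (Real.sqrt ((2 : ℝ) ^ k₂ * δ) ≤ δ ^ ((1 : ℝ) / 4) →
        ∀ t s₁ s₂ : ℝ, 0 ≤ t → t ≤ Real.sqrt ((2 : ℝ) ^ k₂ * δ) →
          ((2 : ℝ) ^ k₁)⁻¹ ≤ s₁ → s₁ < 2 * ((2 : ℝ) ^ k₁)⁻¹ →
          ((2 : ℝ) ^ k₂)⁻¹ ≤ s₂ → s₂ < 2 * ((2 : ℝ) ^ k₂)⁻¹ →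
          |t ^ 4 + 4 * t ^ 3 * s₁ + 12 * t ^ 2 * s₂| ≤ 33 * δ) := by
  set T := Real.sqrt ((2 : ℝ) ^ k₂ * δ) with hTdef
  have hT0 : 0 ≤ T := Real.sqrt_nonneg _
  have hT2 : T ^ 2 = (2 : ℝ) ^ k₂ * δ := Real.sq_sqrt (by positivity)
  have h1 : ((2 : ℝ) ^ k₂ * δ) * ((2 : ℝ) ^ k₂) ^ 2 ≤ ((2 : ℝ) ^ k₁) ^ 2 := by
    have e3 : ((2 : ℝ) ^ k₂) ^ 3 = (2 : ℝ) ^ (3 * k₂) := by rw [← pow_mul, mul_comm]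
    have e2 : ((2 : ℝ) ^ k₁) ^ 2 = (2 : ℝ) ^ (2 * k₁) := by rw [← pow_mul, mul_comm]
    nlinarith [hflatfail]
  have hTle : T * (2 : ℝ) ^ k₂ ≤ (2 : ℝ) ^ k₁ := by
    calc T * (2 : ℝ) ^ k₂ = Real.sqrt (((2 : ℝ) ^ k₂ * δ) * ((2 : ℝ) ^ k₂) ^ 2) := by
          rw [Real.sqrt_mul (by positivity), Real.sqrt_sq (by positivity)]
      _ ≤ Real.sqrt (((2 : ℝ) ^ k₁) ^ 2) := Real.sqrt_le_sqrt h1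
      _ = (2 : ℝ) ^ k₁ := Real.sqrt_sq (by positivity)
  have hk₁pos : (0 : ℝ) < (2 : ℝ) ^ k₁ := by positivity
  have hk₂pos : (0 : ℝ) < (2 : ℝ) ^ k₂ := by positivity
  have ha : ((2 : ℝ) ^ k₁)⁻¹ * T ^ 3 ≤ δ := by
    rw [inv_mul_le_iff₀ hk₁pos]
    have h2 : T * ((2 : ℝ) ^ k₂ * δ) ≤ (2 : ℝ) ^ k₁ * δ := by
      nlinarith [mul_le_mul_of_nonneg_right hTle hδ0.le]
    nlinarith [hT2, hT0]
  have hb : ((2 : ℝ) ^ k₂)⁻¹ * T ^ 2 = δ := by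
    rw [hT2]; field_simp
  refine ⟨ha, by rw [hb]; linarith, ?_⟩
  intro hT4 t s₁ s₂ ht0 htT hs₁ hs₁' hs₂ hs₂'
  have hs₁0 : 0 ≤ s₁ := le_trans (by positivity) hs₁
  have hs₂0 : 0 ≤ s₂ := le_trans (by positivity) hs₂
  have habs : |t ^ 4 + 4 * t ^ 3 * s₁ + 12 * t ^ 2 * s₂|
      = t ^ 4 + 4 * t ^ 3 * s₁ + 12 * t ^ 2 * s₂ := by
    apply abs_of_nonneg
    have h3 := mul_nonneg (pow_nonneg ht0 3) hs₁0
    have h4 := mul_nonneg (pow_nonneg ht0 2) hs₂0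
    nlinarith [pow_nonneg ht0 4]
  rw [habs]
  have hpow : (δ ^ ((1 : ℝ) / 4)) ^ (4 : ℕ) = δ := by
    rw [← Real.rpow_natCast (δ ^ ((1 : ℝ) / 4)) 4, ← Real.rpow_mul hδ0.le]
    norm_num
  have ht4 : t ^ 4 ≤ δ := by
    calc t ^ 4 ≤ T ^ 4 := pow_le_pow_left₀ ht0 htT 4
      _ ≤ (δ ^ ((1 : ℝ) / 4)) ^ 4 := pow_le_pow_left₀ hT0 hT4 4
      _ = δ := hpow
  have ht3 : t ^ 3 * s₁ ≤ T ^ 3 * (2 * ((2 : ℝ) ^ k₁)⁻¹) :=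
    mul_le_mul (pow_le_pow_left₀ ht0 htT 3) hs₁'.le hs₁0 (pow_nonneg hT0 3)
  have ht2 : t ^ 2 * s₂ ≤ T ^ 2 * (2 * ((2 : ℝ) ^ k₂)⁻¹) :=
    mul_le_mul (pow_le_pow_left₀ ht0 htT 2) hs₂'.le hs₂0 (pow_nonneg hT0 2)
  nlinarith [ha, hb, ht4, ht3, ht2]
end
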